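/- Let (S, B_S) be a quadratic Lie algebra, D ∈ 𝔬(B_S) a derivation of S, V a 2m-dimensional space with nondegenerate skew-symmetric form ω, and σ: FD ⊕ S ⊕ Fℏ → 𝔬(ω) a linear map with σ(D) invertible and σ = 0 on S ⊕ Fℏ. On g = S ⊕ FD ⊕ V ⊕ Fℏ define [a,b] = [a,b]_S + B_S(D(a),b)ℏ for a,b ∈ S, [D,u] = σ(D)(u) for u ∈ V, [u,v] = ω(u,v)ℏ for u,v ∈ V, [D,a] = D(a) for a ∈ S, and ℏ central, all other brackets between S and V zero. Define B(x+u, y+v) = B_{S(D)}(x,y) + ω(σ(D)^{-1}(u), v) for x,y ∈ S(D), u,v ∈ V, where B_{S(D)} is the double extension metric. Then g is a quadratic Lie algebra and V ⊕ Fℏ is an ideal of g isomorphic to the Heisenberg Lie algebra 𝔥_m. -/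

import Mathlib

/-- The bracket on `𝔤 = S ⊕ FD ⊕ V ⊕ Fℏ`, modelled as `(F × S × F) × V`
(first factor: `FD ⊕ S ⊕ Fℏ = S(D)`, second factor: `V`):
`[a,b] = [a,b]_S + B_S(D a, b)ℏ`, `[D,a] = D(a)` for `a ∈ S`, `[D,u] = σ(D)(u)`,
`[u,v] = ω(u,v)ℏ` for `u,v ∈ V`, `ℏ` central, `[S,V] = 0`. -/
def bigBracket {F S V : Type*} [Field F] [LieRing S] [LieAlgebra F S]
    [AddCommGroup V] [Module F V]
    (D : S →ₗ[F] S) (BS : LinearMap.BilinForm F S)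
    (σ : (F × S × F) →ₗ[F] V →ₗ[F] V) (ω : V →ₗ[F] V →ₗ[F] F) :
    (F × S × F) × V → (F × S × F) × V → (F × S × F) × V :=
  fun x y =>
    ((0, x.1.1 • D y.1.2.1 - y.1.1 • D x.1.2.1 + ⁅x.1.2.1, y.1.2.1⁆,
        BS (D x.1.2.1) y.1.2.1 + ω x.2 y.2),
      σ x.1 y.2 - σ y.1 x.2)

/-- The bilinear form on `𝔤 = S(D) ⊕ V`: the double-extension metric on `S(D)`
plus `B_V(u,v) = ω(σ(D)⁻¹(u),v)` on `V` (with `e = σ(D)`). -/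
def bigForm {F S V : Type*} [Field F] [LieRing S] [LieAlgebra F S]
    [AddCommGroup V] [Module F V]
    (BS : LinearMap.BilinForm F S) (e : V ≃ₗ[F] V) (ω : V →ₗ[F] V →ₗ[F] F) :
    (F × S × F) × V → (F × S × F) × V → F :=
  fun x y => BS x.1.2.1 y.1.2.1 + x.1.1 * y.1.2.2 + x.1.2.2 * y.1.1 +
    ω (e.symm x.2) y.2

/-! Since `σ` vanishes on `S ⊕ Fℏ`, it is `σ(p) = p_D • σ(D)`, so every axiom becomes an explicit
identity in the four components. On `S(D)` these are the axioms of the double extension: Jacobi in the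
`ℏ`-component says that the cocycle `(a, b) ↦ B_S(D a, b)` is closed, which holds because `D` is a
`B_S`-skew derivation and `B_S` is invariant. On `V` the only input is that `σ(D)` is `ω`-skew, so
`ω(σ(D) u, v)` is symmetric: this gives Jacobi in the `ℏ`-component and the symmetry of
`ω(σ(D)⁻¹ u, v)`. -/

section QuadraticLieAlgebra

variable {R S : Type*} [CommRing R] [LieRing S] [LieAlgebra R S] {BS : LinearMap.BilinForm R S}
  {D : S →ₗ[R] S}

theorem bilin_lie_cyclic (hsymm : ∀ x y : S, BS x y = BS y x)
    (hinv : ∀ x y z : S, BS ⁅x, y⁆ z = BS x ⁅y, z⁆) (x y z : S) :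
    BS x ⁅y, z⁆ = BS y ⁅z, x⁆ := by
  rw [← hinv, hsymm, ← hinv, hsymm]

theorem bilin_derivation_lie_cyclic_sum (hsymm : ∀ x y : S, BS x y = BS y x)
    (hinv : ∀ x y z : S, BS ⁅x, y⁆ z = BS x ⁅y, z⁆)
    (hder : ∀ x y : S, D ⁅x, y⁆ = ⁅D x, y⁆ + ⁅x, D y⁆)
    (hDskew : ∀ x y : S, BS (D x) y = - BS x (D y)) (a b c : S) :
    BS (D a) ⁅b, c⁆ + BS (D b) ⁅c, a⁆ + BS (D c) ⁅a, b⁆ = 0 := by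
  have h := hDskew a ⁅b, c⁆
  rw [hder, map_add] at h
  linear_combination h - bilin_lie_cyclic hsymm hinv a (D b) c -
    bilin_lie_cyclic hsymm hinv a b (D c) - bilin_lie_cyclic hsymm hinv b (D c) a

theorem bilin_derivation_lie (hsymm : ∀ x y : S, BS x y = BS y x)
    (hinv : ∀ x y z : S, BS ⁅x, y⁆ z = BS x ⁅y, z⁆)
    (hder : ∀ x y : S, D ⁅x, y⁆ = ⁅D x, y⁆ + ⁅x, D y⁆) (a b c : S) :
    BS (D ⁅a, b⁆) c = BS (D a) ⁅b, c⁆ + BS (D b) ⁅c, a⁆ := by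
  rw [hder, map_add, LinearMap.add_apply, hinv, hinv, bilin_lie_cyclic hsymm hinv a (D b) c]

theorem bilin_derivation_sq_symm (hsymm : ∀ x y : S, BS x y = BS y x)
    (hDskew : ∀ x y : S, BS (D x) y = - BS x (D y)) (x y : S) :
    BS (D (D x)) y = BS (D (D y)) x := by
  linear_combination hDskew (D x) y - hDskew x (D y) + hsymm x (D (D y))

end QuadraticLieAlgebra

section SkewEndomorphism

variable {R V : Type*} [CommRing R] [AddCommGroup V] [Module R V] {ω : V →ₗ[R] V →ₗ[R] R}

theorem skew_apply_left_symm (hωskew : ∀ u v : V, ω u v = - ω v u) {E : V →ₗ[R] V}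
    (hE : ∀ u v : V, ω (E u) v = - ω u (E v)) (u v : V) :
    ω (E u) v = ω (E v) u := by
  rw [hE, hωskew]
  ring

theorem skew_symm_apply_apply {e : V ≃ₗ[R] V} (he : ∀ u v : V, ω (e u) v = - ω u (e v))
    (u v : V) : ω (e.symm u) (e v) = - ω u v := by
  have h := he (e.symm u) v
  rw [e.apply_symm_apply] at h
  linear_combination h

theorem skew_symm_apply_left_symm (hωskew : ∀ u v : V, ω u v = - ω v u) {e : V ≃ₗ[R] V}
    (he : ∀ u v : V, ω (e u) v = - ω u (e v)) (u v : V) :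
    ω (e.symm u) v = ω (e.symm v) u := by
  conv_lhs => rw [← e.apply_symm_apply v]
  rw [skew_symm_apply_apply he, hωskew, neg_neg]

end SkewEndomorphism

theorem LinearMap.apply_eq_fst_smul_of_fst_eq_zero {R M N : Type*} [Semiring R] [AddCommMonoid M]
    [Module R M] [AddCommMonoid N] [Module R N] (f : R × M →ₗ[R] N)
    (hf : ∀ p : R × M, p.1 = 0 → f p = 0) (p : R × M) : f p = p.1 • f (1, 0) := by
  have hp : p = p.1 • ((1 : R), (0 : M)) + (0, p.2) := by ext <;> simp
  conv_lhs => rw [hp]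
  rw [map_add, map_smul, hf (0, p.2) rfl, add_zero]

section DoubleExtension

variable {F S V : Type*} [Field F] [LieRing S] [LieAlgebra F S] [AddCommGroup V] [Module F V]
  {BS : LinearMap.BilinForm F S} {D : S →ₗ[F] S} {ω : V →ₗ[F] V →ₗ[F] F}
  {σ : (F × S × F) →ₗ[F] V →ₗ[F] V}

theorem bigBracket_skew (hsymm : ∀ x y : S, BS x y = BS y x)
    (hDskew : ∀ x y : S, BS (D x) y = - BS x (D y)) (hωskew : ∀ u v : V, ω u v = - ω v u)
    (x y : (F × S × F) × V) : bigBracket D BS σ ω x y = - bigBracket D BS σ ω y x := by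
  obtain ⟨⟨α, a, t⟩, u⟩ := x
  obtain ⟨⟨β, b, s⟩, v⟩ := y
  simp only [bigBracket, Prod.neg_mk, Prod.mk.injEq]
  refine ⟨⟨by simp, ?_, ?_⟩, by abel⟩
  · rw [← lie_skew b a]
    module
  · linear_combination hDskew a b - hsymm a (D b) + hωskew u v

theorem bigBracket_jacobi (hsymm : ∀ x y : S, BS x y = BS y x)
    (hinv : ∀ x y z : S, BS ⁅x, y⁆ z = BS x ⁅y, z⁆)
    (hder : ∀ x y : S, D ⁅x, y⁆ = ⁅D x, y⁆ + ⁅x, D y⁆)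
    (hDskew : ∀ x y : S, BS (D x) y = - BS x (D y)) (hωskew : ∀ u v : V, ω u v = - ω v u)
    {E : V →ₗ[F] V} (hE : ∀ u v : V, ω (E u) v = - ω u (E v))
    (hσ : ∀ (p : F × S × F) (v : V), σ p v = p.1 • E v) (x y z : (F × S × F) × V) :
    bigBracket D BS σ ω (bigBracket D BS σ ω x y) z +
      bigBracket D BS σ ω (bigBracket D BS σ ω y z) x +
      bigBracket D BS σ ω (bigBracket D BS σ ω z x) y = 0 := by
  obtain ⟨⟨α, a, t⟩, u⟩ := x
  obtain ⟨⟨β, b, s⟩, v⟩ := y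
  obtain ⟨⟨γ, c, r⟩, w⟩ := z
  have hDD := bilin_derivation_sq_symm hsymm hDskew
  have hT := bilin_derivation_lie hsymm hinv hder
  have hQ := bilin_derivation_lie_cyclic_sum hsymm hinv hder hDskew a b c
  have hEE := skew_apply_left_symm hωskew hE
  rw [show ((0 : (F × S × F) × V)) = (((0 : F), (0 : S), (0 : F)), (0 : V)) from rfl]
  simp only [bigBracket, Prod.mk_add_mk, Prod.mk.injEq,
    map_add, map_sub, map_smul, zero_smul, smul_lie, add_lie, sub_lie, LinearMap.add_apply, LinearMap.sub_apply, LinearMap.smul_apply,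
    smul_eq_mul, zero_sub, zero_add, hσ]
  refine ⟨⟨by simp, ?_, ?_⟩, by module⟩
  · linear_combination (norm := module) (-γ) • hder a b + (-α) • hder b c + (-β) • hder c a +
      (-γ) • (lie_skew a (D b)).symm + (-α) • (lie_skew b (D c)).symm +
      (-β) • (lie_skew c (D a)).symm - lie_jacobi c a b - lie_skew c ⁅a, b⁆ -
      lie_skew a ⁅b, c⁆ - lie_skew b ⁅c, a⁆
  · linear_combination α * hDD b c - β * hDD a c + γ * hDD a b + hT a b c + hT b c a +
      hT c a b + 2 * hQ + α * hEE v w + β * hEE w u + γ * hEE u v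

theorem bigForm_symm (hsymm : ∀ x y : S, BS x y = BS y x) (hωskew : ∀ u v : V, ω u v = - ω v u)
    {e : V ≃ₗ[F] V} (he : ∀ u v : V, ω (e u) v = - ω u (e v)) (x y : (F × S × F) × V) :
    bigForm BS e ω x y = bigForm BS e ω y x := by
  simp only [bigForm]
  rw [hsymm, skew_symm_apply_left_symm hωskew he]
  ring

theorem bigForm_nondegenerate (hnondeg : BS.Nondegenerate)
    (hω_nondeg : ∀ u : V, (∀ v : V, ω u v = 0) → u = 0) {e : V ≃ₗ[F] V}
    (x : (F × S × F) × V) (hx : ∀ y : (F × S × F) × V, bigForm BS e ω x y = 0) : x = 0 := by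
  obtain ⟨⟨α, a, t⟩, u⟩ := x
  have ha : a = 0 := hnondeg.1 a fun b => by simpa [bigForm] using hx ((0, b, 0), 0)
  have hα : α = 0 := by simpa [bigForm, ha] using hx ((0, 0, 1), 0)
  have ht : t = 0 := by simpa [bigForm, ha] using hx ((1, 0, 0), 0)
  have hu : e.symm u = 0 := hω_nondeg _ fun v => by simpa [bigForm] using hx ((0, 0, 0), v)
  simp [ha, hα, ht, e.symm.map_eq_zero_iff.mp hu]

theorem bigForm_bigBracket (hinv : ∀ x y z : S, BS ⁅x, y⁆ z = BS x ⁅y, z⁆)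
    (hDskew : ∀ x y : S, BS (D x) y = - BS x (D y)) {e : V ≃ₗ[F] V}
    (he : ∀ u v : V, ω (e u) v = - ω u (e v))
    (hσ : ∀ (p : F × S × F) (v : V), σ p v = p.1 • e v) (x y z : (F × S × F) × V) :
    bigForm BS e ω (bigBracket D BS σ ω x y) z = bigForm BS e ω x (bigBracket D BS σ ω y z) := by
  obtain ⟨⟨α, a, t⟩, u⟩ := x
  obtain ⟨⟨β, b, s⟩, v⟩ := y
  obtain ⟨⟨γ, c, r⟩, w⟩ := z
  simp only [bigBracket, bigForm, map_add, map_sub, map_smul, LinearMap.add_apply,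
    LinearMap.sub_apply, LinearMap.smul_apply, smul_eq_mul, hσ,
    LinearEquiv.symm_apply_apply, skew_symm_apply_apply he]
  linear_combination hinv a b c + γ * hDskew a b - β * hDskew a c

theorem bigBracket_fst_eq_zero (x y : (F × S × F) × V) (hy₁ : y.1.1 = 0) (hy₂ : y.1.2.1 = 0) :
    (bigBracket D BS σ ω x y).1.1 = 0 ∧ (bigBracket D BS σ ω x y).1.2.1 = 0 :=
  ⟨rfl, by simp [bigBracket, hy₁, hy₂]⟩

theorem bigBracket_heisenberg (hσzero : ∀ p : F × S × F, p.1 = 0 → σ p = 0) (γ δ : F)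
    (u v : V) :
    bigBracket D BS σ ω (((0 : F), (0 : S), γ), u) (((0 : F), (0 : S), δ), v) =
      (((0 : F), (0 : S), ω u v), 0) := by
  simp [bigBracket, hσzero]

end DoubleExtension

/-- Theorem 1.4 (construction direction): given a quadratic Lie algebra `(S,B_S)`,
a derivation `D ∈ 𝔬(B_S)`, a symplectic space `(V,ω)` and a linear map
`σ : S(D) → 𝔬(ω)` with `σ(D)` invertible and `σ = 0` on `S ⊕ Fℏ`, the space
`𝔤 = S ⊕ FD ⊕ V ⊕ Fℏ` with the above bracket and form is a quadratic Lie algebra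
in which `V ⊕ Fℏ` is an ideal with the Heisenberg Lie algebra structure. -/
theorem quadratic_with_heisenberg_ideal_construction
    {F S V : Type*} [Field F] [LieRing S] [LieAlgebra F S]
    [AddCommGroup V] [Module F V]
    (BS : LinearMap.BilinForm F S)
    (hsymm : ∀ x y : S, BS x y = BS y x)
    (hnondeg : BS.Nondegenerate)
    (hinvS : ∀ x y z : S, BS ⁅x, y⁆ z = BS x ⁅y, z⁆)
    (D : S →ₗ[F] S)
    (hder : ∀ x y : S, D ⁅x, y⁆ = ⁅D x, y⁆ + ⁅x, D y⁆)
    (hDskew : ∀ x y : S, BS (D x) y = - BS x (D y))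
    (ω : V →ₗ[F] V →ₗ[F] F)
    (hωskew : ∀ u v : V, ω u v = - ω v u)
    (hω_nondeg : ∀ u : V, (∀ v : V, ω u v = 0) → u = 0)
    (σ : (F × S × F) →ₗ[F] V →ₗ[F] V)
    (hσskew : ∀ p : F × S × F, ∀ u v : V, ω (σ p u) v = - ω u (σ p v))
    (hσzero : ∀ p : F × S × F, p.1 = 0 → σ p = 0)
    (e : V ≃ₗ[F] V)
    (hσD : ∀ v : V, σ (1, 0, 0) v = e v) :
    (∀ x y : (F × S × F) × V, bigBracket D BS σ ω x y = - bigBracket D BS σ ω y x) ∧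
    (∀ x y z : (F × S × F) × V,
        bigBracket D BS σ ω (bigBracket D BS σ ω x y) z +
        bigBracket D BS σ ω (bigBracket D BS σ ω y z) x +
        bigBracket D BS σ ω (bigBracket D BS σ ω z x) y = 0) ∧
    (∀ x y : (F × S × F) × V, bigForm BS e ω x y = bigForm BS e ω y x) ∧
    (∀ x : (F × S × F) × V, (∀ y : (F × S × F) × V, bigForm BS e ω x y = 0) → x = 0) ∧
    (∀ x y z : (F × S × F) × V,
        bigForm BS e ω (bigBracket D BS σ ω x y) z =
          bigForm BS e ω x (bigBracket D BS σ ω y z)) ∧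
    (∀ x y : (F × S × F) × V, y.1.1 = 0 → y.1.2.1 = 0 →
        (bigBracket D BS σ ω x y).1.1 = 0 ∧ (bigBracket D BS σ ω x y).1.2.1 = 0) ∧
    (∀ γ δ : F, ∀ u v : V,
        bigBracket D BS σ ω (((0 : F), (0 : S), γ), u) (((0 : F), (0 : S), δ), v) =
          (((0 : F), (0 : S), ω u v), 0)) := by
  have hσ : ∀ (p : F × S × F) (v : V), σ p v = p.1 • e v := fun p v => by
    rw [LinearMap.apply_eq_fst_smul_of_fst_eq_zero σ hσzero p, LinearMap.smul_apply]
    exact congrArg (p.1 • ·) (hσD v)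
  have he : ∀ u v : V, ω (e u) v = - ω u (e v) := fun u v => by
    simpa only [hσD] using hσskew (1, 0, 0) u v
  exact ⟨bigBracket_skew hsymm hDskew hωskew,
    bigBracket_jacobi hsymm hinvS hder hDskew hωskew he hσ,
    bigForm_symm hsymm hωskew he,
    bigForm_nondegenerate hnondeg hω_nondeg,
    bigForm_bigBracket hinvS hDskew he hσ,
    bigBracket_fst_eq_zero,
    bigBracket_heisenberg hσzero⟩
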